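/- Let X be a metrizable second-countable topological space, ν a Borel measure on X, and F a POVM on the Borel sets of X with values in a complex Hilbert space H that is absolutely continuous with respect to ν. If F has the norm-1 property, then for every point x in the spectrum σ(F) that possesses an open neighborhood of finite ν-measure, one has F({x}) ≠ 0. -/

import Mathlib

open MeasureTheory Filter Topology

/-- A positive-operator-valued measure on a measurable space `X`, with values in the
bounded operators on a complex Hilbert space `H`: each `F Δ` (for measurable `Δ`) is a
positive operator with `F Δ ≤ 1`, and `F` is countably additive in the weak operator
topology on pairwise disjoint measurable sets. -/
structure POVM (X : Type*) [MeasurableSpace X] (H : Type*)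
    [NormedAddCommGroup H] [InnerProductSpace ℂ H] [CompleteSpace H] where
  toFun : Set X → H →L[ℂ] H
  isPositive : ∀ Δ : Set X, MeasurableSet Δ → (toFun Δ).IsPositive
  le_one : ∀ Δ : Set X, MeasurableSet Δ → (1 - toFun Δ).IsPositive
  weak_additive : ∀ Δ : ℕ → Set X, (∀ n, MeasurableSet (Δ n)) →
    Pairwise (Function.onFun Disjoint Δ) → ∀ φ ψ : H,
      Tendsto (fun n => ∑ i ∈ Finset.range n, (inner ℂ φ (toFun (Δ i) ψ) : ℂ))
        atTop (𝓝 (inner ℂ φ (toFun (⋃ n, Δ n) ψ) : ℂ))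

/-- The norm-1 property of a POVM: every measurable set with nonzero value has value of
operator norm one. -/
def POVM.Norm1Property {X : Type*} [MeasurableSpace X] {H : Type*}
    [NormedAddCommGroup H] [InnerProductSpace ℂ H] [CompleteSpace H]
    (F : POVM X H) : Prop :=
  ∀ Δ : Set X, MeasurableSet Δ → F.toFun Δ ≠ 0 → ‖F.toFun Δ‖ = 1

/-- The spectrum of a POVM on a topological space: the points all of whose open
neighbourhoods have nonzero value. -/
def POVM.spectrum {X : Type*} [TopologicalSpace X] [MeasurableSpace X] {H : Type*}
    [NormedAddCommGroup H] [InnerProductSpace ℂ H] [CompleteSpace H]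
    (F : POVM X H) : Set X :=
  {x | ∀ Δ : Set X, IsOpen Δ → x ∈ Δ → F.toFun Δ ≠ 0}

/-!
If `F {x} = 0`, choose an open `V ∋ x` with `c * ν (V \ {x}) < 1`: this is possible because the
punctured neighbourhoods `U n \ {x}` of a countable antitone basis decrease to `∅` and one of
them has finite measure. Absolute continuity then gives `‖F (V \ {x})‖ < 1`, so the norm-1
property forces `F (V \ {x}) = 0`, and additivity gives `F V = F {x} + F (V \ {x}) = 0`,
contradicting `x ∈ σ(F)`.
-/

open scoped ENNReal

namespace POVM

variable {X : Type*} [MeasurableSpace X] {H : Type*} [NormedAddCommGroup H]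
  [InnerProductSpace ℂ H] [CompleteSpace H] (F : POVM X H)

theorem toFun_empty : F.toFun ∅ = 0 := by
  refine ContinuousLinearMap.ext fun ψ => ext_inner_left ℂ fun φ => ?_
  set a := inner ℂ φ (F.toFun ∅ ψ)
  have hsum : Tendsto (fun n => ∑ _i ∈ Finset.range n, a) atTop (𝓝 a) := by
    simpa only [Set.iUnion_empty] using
      F.weak_additive (fun _ => ∅) (fun _ => .empty) (fun _ _ _ => disjoint_bot_left) φ ψ
  -- the partial sums are `n • a`, and consecutive ones differ by `a`
  have hdiff := ((tendsto_add_atTop_iff_nat 1).2 hsum).sub hsum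
  simp only [Finset.sum_range_succ, add_sub_cancel_left, sub_self] at hdiff
  rw [tendsto_const_nhds_iff.1 hdiff, zero_apply, inner_zero_right]

theorem toFun_union {A B : Set X} (hA : MeasurableSet A) (hB : MeasurableSet B)
    (hAB : Disjoint A B) : F.toFun (A ∪ B) = F.toFun A + F.toFun B := by
  let Δ : ℕ → Set X
    | 0 => A
    | 1 => B
    | _ + 2 => ∅
  have hmeas : ∀ n, MeasurableSet (Δ n)
    | 0 => hA
    | 1 => hB
    | _ + 2 => .empty
  have hdisj : Pairwise (Function.onFun Disjoint Δ) := by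
    rintro (_ | _ | i) (_ | _ | j) hij <;> simp_all [Function.onFun, Δ, hAB.symm]
  have hunion : ⋃ n, Δ n = A ∪ B := by
    simp [← Set.union_iUnion_nat_succ, Δ]
  refine ContinuousLinearMap.ext fun ψ => ext_inner_left ℂ fun φ => ?_
  have hsum := F.weak_additive Δ hmeas hdisj φ ψ
  rw [hunion] at hsum
  have hconst : ∀ n, ∑ i ∈ Finset.range (n + 2), inner ℂ φ (F.toFun (Δ i) ψ) =
      inner ℂ φ (F.toFun A ψ) + inner ℂ φ (F.toFun B ψ) := by
    intro n
    simp [Finset.sum_range_succ', Δ, toFun_empty, add_comm]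
  have := tendsto_nhds_unique ((tendsto_add_atTop_iff_nat 2).2 hsum)
    (by simpa only [hconst] using tendsto_const_nhds)
  rw [this, add_apply, inner_add_right]

variable {F} in
theorem Norm1Property.toFun_eq_zero_of_norm_lt_one (hF : F.Norm1Property) {Δ : Set X}
    (hΔ : MeasurableSet Δ) (hlt : ‖F.toFun Δ‖ < 1) : F.toFun Δ = 0 := by
  by_contra hne
  exact hlt.ne (hF Δ hΔ hne)

end POVM

namespace MeasureTheory.Measure

variable {X : Type*} [TopologicalSpace X] [T1Space X] [FirstCountableTopology X]
  [MeasurableSpace X] [OpensMeasurableSpace X]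

theorem exists_isOpen_measure_diff_singleton_lt {μ : Measure X} {x : X}
    (hμ : μ.FiniteAtFilter (𝓝 x)) {ε : ℝ≥0∞} (hε : 0 < ε) :
    ∃ V, IsOpen V ∧ x ∈ V ∧ μ (V \ {x}) < ε := by
  obtain ⟨U, hU, hbasis⟩ := (nhds_basis_opens x).exists_antitone_subbasis
  obtain ⟨s, hs, hμs⟩ := hμ
  obtain ⟨n, hns⟩ := hbasis.mem_iff.1 hs
  have hlim : Tendsto (fun n => μ (U n \ {x})) atTop (𝓝 0) := by
    have hker : ⋂ n, U n = {x} := by simpa using biInter_basis_nhds hbasis.toHasBasis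
    have hInter : ⋂ n, U n \ {x} = ∅ := by
      simp only [Set.sdiff_eq, ← Set.iInter_inter, hker, Set.inter_compl_self]
    rw [← measure_empty (μ := μ), ← hInter]
    exact tendsto_measure_iInter_atTop
      (fun n => ((hU n).2.measurableSet.diff (measurableSet_singleton x)).nullMeasurableSet)
      (fun m n hmn => Set.sdiff_subset_sdiff_left (hbasis.antitone hmn))
      ⟨n, (measure_mono (Set.sdiff_subset.trans hns) |>.trans_lt hμs).ne⟩
  obtain ⟨m, hm⟩ := (hlim.eventually_lt_const hε).exists
  exact ⟨U m, (hU m).2, (hU m).1, hm⟩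

end MeasureTheory.Measure

theorem norm1Property_imp_singleton_ne_zero_of_absolutelyContinuous_general
    {X : Type*} [TopologicalSpace X] [TopologicalSpace.MetrizableSpace X]
    [MeasurableSpace X] [BorelSpace X]
    {H : Type*} [NormedAddCommGroup H] [InnerProductSpace ℂ H] [CompleteSpace H]
    (F : POVM X H) (ν : Measure X) (c : NNReal)
    (habs : ∀ Δ : Set X, MeasurableSet Δ → (‖F.toFun Δ‖₊ : ENNReal) ≤ c * ν Δ)
    (hnorm1 : F.Norm1Property) :
    ∀ x ∈ F.spectrum, (∃ U : Set X, IsOpen U ∧ x ∈ U ∧ ν U < ⊤) →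
      F.toFun {x} ≠ 0 := by
  rintro x hx ⟨U, hU, hxU, hνU⟩ hFx
  obtain ⟨V, hV, hxV, hνV⟩ := ν.exists_isOpen_measure_diff_singleton_lt
    ⟨U, hU.mem_nhds hxU, hνU⟩ (ENNReal.div_pos one_ne_zero ENNReal.coe_ne_top)
  have hmeas : MeasurableSet (V \ {x}) := hV.measurableSet.diff (measurableSet_singleton x)
  have hpunctured : F.toFun (V \ {x}) = 0 :=
    hnorm1.toFun_eq_zero_of_norm_lt_one hmeas <| by
      exact_mod_cast (habs _ hmeas).trans_lt (ENNReal.mul_lt_of_lt_div' hνV)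
  apply hx V hV hxV
  rw [← Set.insert_sdiff_self_of_mem hxV, Set.insert_eq,
    F.toFun_union (measurableSet_singleton x) hmeas Set.disjoint_sdiff_right, hFx, hpunctured,
    add_zero]

/-- Necessary condition for the norm-1 property for an absolutely continuous POVM:
if a POVM on a metrizable second-countable space is absolutely continuous with respect to
a Borel measure `ν` and has the norm-1 property, then it is nonzero on the singleton of
every spectrum point possessing an open neighbourhood of finite `ν`-measure. -/
theorem norm1Property_imp_singleton_ne_zero_of_absolutelyContinuous
    {X : Type*} [TopologicalSpace X] [TopologicalSpace.MetrizableSpace X]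
    [SecondCountableTopology X] [MeasurableSpace X] [BorelSpace X]
    {H : Type*} [NormedAddCommGroup H] [InnerProductSpace ℂ H] [CompleteSpace H]
    (F : POVM X H) (ν : Measure X) (c : NNReal)
    (habs : ∀ Δ : Set X, MeasurableSet Δ → (‖F.toFun Δ‖₊ : ENNReal) ≤ c * ν Δ)
    (hnorm1 : F.Norm1Property) :
    ∀ x ∈ F.spectrum, (∃ U : Set X, IsOpen U ∧ x ∈ U ∧ ν U < ⊤) →
      F.toFun {x} ≠ 0 :=
  norm1Property_imp_singleton_ne_zero_of_absolutelyContinuous_general F ν c habs hnorm1
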